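/- arXiv:2101.06667 — 3 statements merged into one kernel-verified Lean document; each statement's English description precedes it below -/
import Mathlib

section
/- Let L be a multiplicative lattice and 𝔛 an M-closed subset. If i is a maximal element of the set of 𝔛-elements of L (ordered by the lattice order), then i is a prime element of L. -/
/-- A multiplicative lattice: a complete lattice with a commutative, associative
multiplication distributing over arbitrary joins, with top as identity. -/
class MultiplicativeLattice (L : Type*) extends CompleteLattice L, CommMonoid L where
  mul_sSup : ∀ (a : L) (S : Set L), a * sSup S = ⨆ b ∈ S, a * b
  one_eq_top : (1 : L) = ⊤

namespace MultiplicativeLattice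

variable {L : Type*}

/-- A subset is M-closed if it is closed under multiplication. -/
def MClosed [MultiplicativeLattice L] (X : Set L) : Prop :=
  ∀ a ∈ X, ∀ b ∈ X, a * b ∈ X

/-- A proper element `i` is an `X`-element if `a * b ≤ i` and `a ∉ X` imply `b ≤ i`. -/
def IsXElement [MultiplicativeLattice L] (X : Set L) (i : L) : Prop :=
  i ≠ ⊤ ∧ ∀ a b : L, a * b ≤ i → a ∉ X → b ≤ i

/-- A prime element. -/
def IsPrime [MultiplicativeLattice L] (p : L) : Prop :=
  p ≠ ⊤ ∧ ∀ a b : L, a * b ≤ p → a ≤ p ∨ b ≤ p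

/-- The residual `(i : a) = ⋁ {x | x * a ≤ i}`. -/
def residual [MultiplicativeLattice L] (i a : L) : L := sSup {x : L | x * a ≤ i}

/-- The radical of an element. -/
def radical [MultiplicativeLattice L] (a : L) : L :=
  sSup {x : L | IsCompactElement x ∧ ∃ n : ℕ, x ^ (n + 1) ≤ a}

/-- A primary element. -/
def IsPrimary [MultiplicativeLattice L] (i : L) : Prop :=
  i ≠ ⊤ ∧ ∀ a b : L, a * b ≤ i → a ≤ i ∨ b ≤ radical i

/-- A minimal prime element. -/
def IsMinimalPrime [MultiplicativeLattice L] (p : L) : Prop :=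
  IsPrime p ∧ ∀ q : L, IsPrime q → q ≤ p → q = p

/-- An `X`-multiplicatively closed subset: a nonempty set `A` of compact elements
containing `L_* \ X`, with `a₁ ∈ L_* \ X` and `a₂ ∈ A` implying `a₁ * a₂ ∈ A`. -/
def IsXMultClosed [MultiplicativeLattice L] (X A : Set L) : Prop :=
  A.Nonempty ∧ (∀ a ∈ A, IsCompactElement a) ∧
    ({c : L | IsCompactElement c} \ X) ⊆ A ∧
    ∀ a₁ ∈ ({c : L | IsCompactElement c} \ X), ∀ a₂ ∈ A, a₁ * a₂ ∈ A

end MultiplicativeLattice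

/-- A c-lattice: a compactly generated multiplicative lattice in which `⊤` is compact
and the product of compact elements is compact. -/
class CLattice (L : Type*) extends MultiplicativeLattice L where
  compactlyGenerated : ∀ x : L,
    x = sSup {c : L | IsCompactElement c ∧ c ≤ x}
  compact_top : IsCompactElement (⊤ : L)
  compact_mul : ∀ a b : L, IsCompactElement a →
    IsCompactElement b → IsCompactElement (a * b)

open MultiplicativeLattice CompleteLattice

/-! If `a ≰ i`, the residual `(i : a)` is again an `X`-element above `i`, so maximality forces
`(i : a) = i`; then `a * b ≤ i` puts `b` below `(i : a) = i`. -/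

namespace MultiplicativeLattice

variable {L : Type*} [MultiplicativeLattice L]

theorem mul_le_mul_left (a : L) {x y : L} (h : x ≤ y) : a * x ≤ a * y := by
  have hpair : a * sSup {x, y} = a * x ⊔ a * y := by
    rw [mul_sSup]
    simp [iSup_or, iSup_sup_eq]
  rw [sSup_pair, sup_eq_right.mpr h] at hpair
  rw [hpair]
  exact le_sup_left

theorem mul_le_self (x a : L) : x * a ≤ x :=
  calc x * a ≤ x * ⊤ := mul_le_mul_left x le_top
    _ = x := by rw [← one_eq_top, mul_one]

theorem residual_mul_le (i a : L) : residual i a * a ≤ i := by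
  rw [residual, mul_comm, mul_sSup]
  exact iSup₂_le fun x hx => by rw [mul_comm]; exact hx

theorem le_residual_iff {i a x : L} : x ≤ residual i a ↔ x * a ≤ i :=
  ⟨fun h => by
    calc x * a = a * x := mul_comm x a
      _ ≤ a * residual i a := mul_le_mul_left a h
      _ = residual i a * a := mul_comm _ _
      _ ≤ i := residual_mul_le i a,
    fun h => le_sSup h⟩

theorem le_residual_self (i a : L) : i ≤ residual i a :=
  le_residual_iff.mpr (mul_le_self i a)

theorem residual_ne_top {i a : L} (ha : ¬a ≤ i) : residual i a ≠ ⊤ := by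
  intro h
  apply ha
  simpa [h, ← one_eq_top] using residual_mul_le i a

theorem IsXElement.residual {X : Set L} {i a : L} (hi : IsXElement X i) (ha : ¬a ≤ i) :
    IsXElement X (residual i a) := by
  refine ⟨residual_ne_top ha, fun c d hcd hc => le_residual_iff.mpr ?_⟩
  have hcda : c * (d * a) ≤ i := by
    rw [← mul_assoc]
    exact le_residual_iff.mp hcd
  exact hi.2 c (d * a) hcda hc

end MultiplicativeLattice

theorem stmt9_general {L : Type*} [MultiplicativeLattice L] (X : Set L)
    (i : L) (hi : IsXElement X i)
    (hmax : ∀ k : L, IsXElement X k → i ≤ k → i = k) : IsPrime i := by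
  refine ⟨hi.1, fun a b hab => or_iff_not_imp_left.mpr fun ha => ?_⟩
  have hres : i = residual i a := hmax _ (hi.residual ha) (le_residual_self i a)
  rw [hres, le_residual_iff, mul_comm]
  exact hab

theorem stmt9 {L : Type*} [MultiplicativeLattice L] (X : Set L) (hX : MClosed X)
    (i : L) (hi : IsXElement X i)
    (hmax : ∀ k : L, IsXElement X k → i ≤ k → i = k) : IsPrime i :=
  stmt9_general X i hi hmax
end

section
/- Let L be a c-lattice and j the meet of all prime elements of L, with 𝔛 = (j] M-closed. Then there exists an 𝔛-element in L if and only if j is a prime element of L. -/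
open MultiplicativeLattice CompleteLattice
/-!
A prime `j` is itself an `𝔛`-element. Conversely, an `𝔛`-element `i` lies above no power of a
product `a * b` with `a, b ∉ 𝔛`. If `a * b ≤ j` with `a, b ≰ j`, we may shrink `a` and
`b` to compact elements; then `a * b` is a compact element below every prime, hence nilpotent by the
lattice version of Krull's theorem (an element maximal among those above no power of a compact `c`
is prime). So `(a * b) ^ n = ⊥ ≤ i`, a contradiction.
-/

namespace MultiplicativeLattice

variable {L : Type*}

section Multiplicative

variable [MultiplicativeLattice L]

theorem mul_sup (a b c : L) : a * (b ⊔ c) = a * b ⊔ a * c := by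
  simpa only [sSup_pair, iSup_pair] using mul_sSup a {b, c}

instance : IsOrderedMonoid L where
  mul_le_mul_left a b hab c := by
    rw [mul_comm a, mul_comm b, ← sup_eq_right, ← mul_sup, sup_eq_right.mpr hab]

theorem mul_top (a : L) : a * ⊤ = a := by
  rw [← one_eq_top, mul_one]

theorem mul_le_left (a b : L) : a * b ≤ a :=
  mul_le_of_le_one_right' (one_eq_top (L := L) ▸ le_top)

theorem mul_le_right (a b : L) : a * b ≤ b :=
  mul_comm a b ▸ mul_le_left b a

theorem sup_mul_sup_le (m a b : L) : (m ⊔ a) * (m ⊔ b) ≤ m ⊔ a * b := by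
  rw [mul_sup, mul_comm (m ⊔ a) b, mul_sup, mul_comm b a]
  exact sup_le ((mul_le_right _ _).trans le_sup_left) (sup_le_sup_right (mul_le_right _ _) _)

theorem isPrime_of_maximal_not_pow_le {c m : L} (hm : Maximal (fun x => ∀ n, ¬ c ^ n ≤ x) m) :
    IsPrime m := by
  refine ⟨fun hm_top => hm.1 0 (by simp [hm_top]), fun a b hab => ?_⟩
  by_contra! hcon
  have hpow_le_sup {x : L} (hx : ¬ x ≤ m) : ∃ n, c ^ n ≤ m ⊔ x := by
    by_contra! h
    exact hx (le_sup_right.trans (hm.2 h le_sup_left))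
  obtain ⟨n, hn⟩ := hpow_le_sup hcon.1
  obtain ⟨k, hk⟩ := hpow_le_sup hcon.2
  refine hm.1 (n + k) ?_
  calc c ^ (n + k) = c ^ n * c ^ k := pow_add c n k
    _ ≤ (m ⊔ a) * (m ⊔ b) := mul_le_mul' hn hk
    _ ≤ m ⊔ a * b := sup_mul_sup_le m a b
    _ = m := sup_eq_left.mpr hab

theorem IsPrime.isXElement {p : L} (hp : IsPrime p) : IsXElement {x | x ≤ p} p :=
  ⟨hp.1, fun a b hab ha => (hp.2 a b hab).resolve_left ha⟩

theorem IsXElement.le_of_pow_mul_le {X : Set L} {i a b : L} (hi : IsXElement X i) (ha : a ∉ X) :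
    ∀ n : ℕ, a ^ n * b ≤ i → b ≤ i
  | 0 => by simp
  | n + 1 => fun h => hi.le_of_pow_mul_le ha n (hi.2 a _ (by rwa [pow_succ', mul_assoc] at h) ha)

theorem IsXElement.not_mul_pow_le {X : Set L} {i a b : L} (hi : IsXElement X i) (ha : a ∉ X)
    (hb : b ∉ X) (n : ℕ) : ¬ (a * b) ^ n ≤ i := by
  intro h
  refine hi.1 (top_le_iff.mp (hi.le_of_pow_mul_le hb n (hi.le_of_pow_mul_le ha n ?_)))
  rwa [← mul_assoc, ← mul_pow, mul_top]

end Multiplicative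

section CLattice

variable [CLattice L]

instance : IsCompactlyGenerated L :=
  ⟨fun x => ⟨_, fun _ hc => hc.1, (CLattice.compactlyGenerated x).symm⟩⟩

theorem isCompactElement_pow {c : L} (hc : IsCompactElement c) :
    ∀ n : ℕ, IsCompactElement (c ^ n)
  | 0 => by simpa [one_eq_top] using CLattice.compact_top
  | n + 1 => pow_succ c n ▸ CLattice.compact_mul _ _ (isCompactElement_pow hc n) hc

theorem exists_isPrime_not_le {c : L} (hc : IsCompactElement c) (h : ∀ n : ℕ, c ^ n ≠ ⊥) :
    ∃ p : L, IsPrime p ∧ ¬ c ≤ p := by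
  set T : Set L := {x | ∀ n : ℕ, ¬ c ^ n ≤ x}
  -- compactness of the powers of `c` makes `T` closed under suprema of chains
  have hchain :
      ∀ C ⊆ T, IsChain (· ≤ ·) C → ∀ y ∈ C, ∃ ub ∈ T, ∀ z ∈ C, z ≤ ub := by
    refine fun C hCT hC y hy => ⟨sSup C, fun n hn => ?_, fun z hz => le_sSup hz⟩
    obtain ⟨x, hxC, hx⟩ := (isCompactElement_iff_le_of_directed_sSup_le L _).mp
      (isCompactElement_pow hc n) C ⟨y, hy⟩ hC.directedOn hn
    exact hCT hxC n hx
  obtain ⟨m, -, hm⟩ := zorn_le_nonempty₀ T hchain ⊥ fun n => (h n).imp le_bot_iff.mp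
  exact ⟨m, isPrime_of_maximal_not_pow_le hm, fun hcm => hm.1 1 (by rwa [pow_one])⟩

theorem exists_compact_le_not_le {a b : L} (h : ¬ a ≤ b) :
    ∃ c, IsCompactElement c ∧ c ≤ a ∧ ¬ c ≤ b := by
  simpa only [le_iff_compact_le_imp (a := a), not_forall, exists_prop] using h

end CLattice

end MultiplicativeLattice

theorem stmt13 {L : Type*} [CLattice L] (hp : ∃ p : L, IsPrime p)
    (j : L) (hj : j = sInf {p : L | IsPrime p}) :
    (∃ i : L, IsXElement {x : L | x ≤ j} i) ↔ IsPrime j := by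
  refine ⟨fun ⟨i, hi⟩ => ⟨?_, fun a b hab => ?_⟩,
    fun hj_prime => ⟨j, hj_prime.isXElement⟩⟩
  · obtain ⟨p, hp⟩ := hp
    exact fun hj_top => hp.1 (top_le_iff.mp (hj_top ▸ hj ▸ sInf_le hp))
  by_contra! hcon
  obtain ⟨a', ha'c, ha'a, ha'j⟩ := exists_compact_le_not_le hcon.1
  obtain ⟨b', hb'c, hb'b, hb'j⟩ := exists_compact_le_not_le hcon.2
  obtain ⟨n, hn⟩ : ∃ n, (a' * b') ^ n = ⊥ := by
    by_contra! h
    obtain ⟨p, hp, hcp⟩ := exists_isPrime_not_le (CLattice.compact_mul _ _ ha'c hb'c) h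
    exact hcp ((mul_le_mul' ha'a hb'b).trans (hab.trans (hj ▸ sInf_le hp)))
  exact hi.not_mul_pow_le ha'j hb'j n (hn ▸ bot_le)
end

section
/- Let L be a c-lattice, j a proper element, 𝔛 = (j] an M-closed subset, and A an 𝔛-multiplicatively closed subset of L. If a ∈ L satisfies t ≰ a for all t ∈ A, then there exists an 𝔛-element i of L with a ≤ i such that i is maximal among elements c ≥ a with t ≰ c for all t ∈ A. -/
open MultiplicativeLattice CompleteLattice

/-!
Since `A` consists of compact elements, the join of a chain of elements avoiding `A` avoids `A`,
so Zorn's lemma gives an `i ≥ a` maximal among the elements avoiding `A`. If `x * y ≤ i` with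
`x ≰ j` and `y ≰ i`, maximality puts some `t ∈ A` below `i ⊔ y`; a compact `x' ≤ x` with
`x' ≰ j` then gives `x' * t ∈ A` with `x' * t ≤ x' * i ⊔ x' * y ≤ i`, a contradiction.
-/

namespace MultiplicativeLattice

variable {L : Type*} [MultiplicativeLattice L]

theorem mul_sup_s19 (x y z : L) : x * (y ⊔ z) = x * y ⊔ x * z := by
  rw [← sSup_pair, mul_sSup, iSup_pair]

instance inst_s19 : IsOrderedMonoid L where
  mul_le_mul_left y z hyz x := by
    rw [mul_comm y, mul_comm z, ← sup_eq_right, ← mul_sup_s19, sup_eq_right.mpr hyz]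

theorem mul_le_right_s19 (x i : L) : x * i ≤ i :=
  mul_le_of_le_one_left' (one_eq_top (L := L) ▸ le_top)

end MultiplicativeLattice

instance CLattice.isCompactlyGenerated {L : Type*} [CLattice L] : IsCompactlyGenerated L :=
  ⟨fun x => ⟨_, fun _ hc => hc.1, (CLattice.compactlyGenerated x).symm⟩⟩

theorem exists_le_maximal_forall_not_le {α : Type*} [CompleteLattice α] {A : Set α}
    (hA : ∀ t ∈ A, IsCompactElement t) {a : α} (ha : ∀ t ∈ A, ¬ t ≤ a) :
    ∃ i, a ≤ i ∧ Maximal (fun c => ∀ t ∈ A, ¬ t ≤ c) i := by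
  refine zorn_le_nonempty₀ {c | ∀ t ∈ A, ¬ t ≤ c} (fun C hCA hC c hc => ?_) a ha
  refine ⟨sSup C, fun t ht hle => ?_, fun _ => le_sSup⟩
  obtain ⟨d, hdC, htd⟩ := (isCompactElement_iff_le_of_directed_sSup_le α t).mp (hA t ht) C
    ⟨c, hc⟩ hC.directedOn hle
  exact hCA hdC t ht htd

theorem isXElement_of_maximal_forall_not_le {L : Type*} [CLattice L] {j : L} {A : Set L}
    (hA : IsXMultClosed {x | x ≤ j} A) {i : L} (hi : Maximal (fun c => ∀ t ∈ A, ¬ t ≤ c) i) :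
    IsXElement {x | x ≤ j} i := by
  obtain ⟨⟨t₀, ht₀⟩, -, -, hmul⟩ := hA
  refine ⟨fun hi_top => hi.prop t₀ ht₀ (hi_top ▸ le_top), fun x y hxy hxj => ?_⟩
  by_contra hyi
  obtain ⟨x', hx'_compact, hx'x, hx'j⟩ : ∃ x', IsCompactElement x' ∧ x' ≤ x ∧ ¬ x' ≤ j := by
    simpa [le_iff_compact_le_imp (a := x) (b := j)] using hxj
  obtain ⟨t, htA, hty⟩ : ∃ t ∈ A, t ≤ i ⊔ y := by
    simpa using hi.not_prop_of_gt (left_lt_sup.mpr hyi)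
  have hx't : x' * t ≤ i :=
    calc x' * t ≤ x' * (i ⊔ y) := mul_le_mul_right hty x'
      _ = x' * i ⊔ x' * y := mul_sup_s19 x' i y
      _ ≤ i := sup_le (mul_le_right_s19 x' i) ((mul_le_mul_left hx'x y).trans hxy)
  exact hi.prop _ (hmul x' ⟨hx'_compact, hx'j⟩ t htA) hx't

theorem stmt19_general {L : Type*} [CLattice L] (j : L) (A : Set L)
    (hA : IsXMultClosed {x : L | x ≤ j} A) (a : L) (ha : ∀ t ∈ A, ¬ t ≤ a) :
    ∃ i : L, IsXElement {x : L | x ≤ j} i ∧ a ≤ i ∧ (∀ t ∈ A, ¬ t ≤ i) ∧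
      ∀ c : L, a ≤ c → (∀ t ∈ A, ¬ t ≤ c) → i ≤ c → i = c := by
  obtain ⟨i, hai, hi⟩ := exists_le_maximal_forall_not_le hA.2.1 ha
  exact ⟨i, isXElement_of_maximal_forall_not_le hA hi, hai, hi.prop,
    fun c _ hc hic => (hi.eq_of_ge hc hic).symm⟩

theorem stmt19 {L : Type*} [CLattice L] (j : L) (hj : j ≠ ⊤) (A : Set L)
    (hA : IsXMultClosed {x : L | x ≤ j} A) (a : L) (ha : ∀ t ∈ A, ¬ t ≤ a) :
    ∃ i : L, IsXElement {x : L | x ≤ j} i ∧ a ≤ i ∧ (∀ t ∈ A, ¬ t ≤ i) ∧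
      ∀ c : L, a ≤ c → (∀ t ∈ A, ¬ t ≤ c) → i ≤ c → i = c :=
  stmt19_general j A hA a ha
end
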